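/- Let G(m,n) = 6·(Σᵢ mᵢ²nᵢ⁴ − 2Σ_{i<j} mᵢmⱼnᵢ²nⱼ²) and let p be a prime dividing Σᵢ mᵢ²nᵢ⁴ − 2Σ_{i<j} mᵢmⱼnᵢ²nⱼ² but not dividing all six partial derivatives of G at (m,n). Then p does not divide n₁n₂n₃. -/
import Mathlib


open MvPolynomial

/-- The dual sextic form D ∈ ℤ[m₁,m₂,m₃,n₁,n₂,n₃], with variables X 0, X 1, X 2 for
m₁, m₂, m₃ and X 3, X 4, X 5 for n₁, n₂, n₃. -/
noncomputable def Dpoly : MvPolynomial (Fin 6) ℤ :=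
  X 0 ^ 2 * X 3 ^ 4 + X 1 ^ 2 * X 4 ^ 4 + X 2 ^ 2 * X 5 ^ 4
    - 2 * (X 0 * X 1 * X 3 ^ 2 * X 4 ^ 2 + X 0 * X 2 * X 3 ^ 2 * X 5 ^ 2
        + X 1 * X 2 * X 4 ^ 2 * X 5 ^ 2)

/-- G = 6D. -/
noncomputable def Gpoly : MvPolynomial (Fin 6) ℤ := 6 * Dpoly

lemma pderiv_two' (i : Fin 6) : pderiv i (2 : MvPolynomial (Fin 6) ℤ) = 0 := by
  rw [(map_ofNat (C : ℤ →+* MvPolynomial (Fin 6) ℤ) 2).symm]; exact pderiv_C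

lemma pderiv_six' (i : Fin 6) : pderiv i (6 : MvPolynomial (Fin 6) ℤ) = 0 := by
  rw [(map_ofNat (C : ℤ →+* MvPolynomial (Fin 6) ℤ) 6).symm]; exact pderiv_C

lemma key_lemma (p a b c x y z : ℤ) (hp : Prime p)
    (hD : p ∣ a^2*x^4 + b^2*y^4 + c^2*z^4
        - 2*(a*b*x^2*y^2 + a*c*x^2*z^2 + b*c*y^2*z^2))
    (hx : p ∣ x) :
    p ∣ 12*x^2*(a*x^2 - b*y^2 - c*z^2) ∧ p ∣ 12*y^2*(b*y^2 - a*x^2 - c*z^2)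
      ∧ p ∣ 12*z^2*(c*z^2 - a*x^2 - b*y^2)
      ∧ p ∣ 24*a*x*(a*x^2 - b*y^2 - c*z^2) ∧ p ∣ 24*b*y*(b*y^2 - a*x^2 - c*z^2)
      ∧ p ∣ 24*c*z*(c*z^2 - a*x^2 - b*y^2) := by
  have hsq : p ∣ (b*y^2 - c*z^2)^2 := by
    have e : (b*y^2 - c*z^2)^2
        = (a^2*x^4 + b^2*y^4 + c^2*z^4
            - 2*(a*b*x^2*y^2 + a*c*x^2*z^2 + b*c*y^2*z^2))
          - x * (x*(a^2*x^2 - 2*a*b*y^2 - 2*a*c*z^2)) := by ring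
    rw [e]
    exact dvd_sub hD (hx.mul_right _)
  have hs : p ∣ b*y^2 - c*z^2 := hp.dvd_of_dvd_pow hsq
  obtain ⟨u, hu⟩ := hx
  obtain ⟨v, hv⟩ := hs
  subst hu
  refine ⟨⟨12*p*u^2*(a*p^2*u^2 - b*y^2 - c*z^2), by ring⟩,
    ⟨12*y^2*(v - a*p*u^2), by linear_combination 12*y^2*hv⟩,
    ⟨-(12*z^2*(v + a*p*u^2)), by linear_combination (-12*z^2)*hv⟩,
    ⟨24*a*u*(a*p^2*u^2 - b*y^2 - c*z^2), by ring⟩,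
    ⟨24*b*y*(v - a*p*u^2), by linear_combination 24*b*y*hv⟩,
    ⟨-(24*c*z*(v + a*p*u^2)), by linear_combination (-24*c*z)*hv⟩⟩

/-- If p ∣ D(m,n) but p does not divide all six partial derivatives of G = 6D at (m,n),
then p ∤ n₁n₂n₃. -/
theorem stmt16 (p : ℕ) (hp : p.Prime) (m₁ m₂ m₃ n₁ n₂ n₃ : ℤ)
    (hD : (p : ℤ) ∣ eval ![m₁, m₂, m₃, n₁, n₂, n₃] Dpoly)
    (hgrad : ¬ ∀ i : Fin 6, (p : ℤ) ∣ eval ![m₁, m₂, m₃, n₁, n₂, n₃] (pderiv i Gpoly)) :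
    ¬ (p : ℤ) ∣ n₁ * n₂ * n₃ := by
  intro hn
  have hpI : Prime (p : ℤ) := Nat.prime_iff_prime_int.mp hp
  have hv5 : ![m₁, m₂, m₃, n₁, n₂, n₃] 5 = n₃ := rfl
  have hD' : (p : ℤ) ∣ m₁^2*n₁^4 + m₂^2*n₂^4 + m₃^2*n₃^4
      - 2*(m₁*m₂*n₁^2*n₂^2 + m₁*m₃*n₁^2*n₃^2 + m₂*m₃*n₂^2*n₃^2) := by
    rwa [show eval ![m₁, m₂, m₃, n₁, n₂, n₃] Dpoly
        = m₁^2*n₁^4 + m₂^2*n₂^4 + m₃^2*n₃^4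
          - 2*(m₁*m₂*n₁^2*n₂^2 + m₁*m₃*n₁^2*n₃^2 + m₂*m₃*n₂^2*n₃^2) from by
      simp [Dpoly, hv5]; try ring] at hD
  have h0 : eval ![m₁, m₂, m₃, n₁, n₂, n₃] (pderiv 0 Gpoly)
      = 12*n₁^2*(m₁*n₁^2 - m₂*n₂^2 - m₃*n₃^2) := by
    simp [Gpoly, Dpoly, pderiv_X, pderiv_two', pderiv_six', hv5]; ring
  have h1 : eval ![m₁, m₂, m₃, n₁, n₂, n₃] (pderiv 1 Gpoly)
      = 12*n₂^2*(m₂*n₂^2 - m₁*n₁^2 - m₃*n₃^2) := by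
    simp [Gpoly, Dpoly, pderiv_X, pderiv_two', pderiv_six', hv5]; ring
  have h2 : eval ![m₁, m₂, m₃, n₁, n₂, n₃] (pderiv 2 Gpoly)
      = 12*n₃^2*(m₃*n₃^2 - m₁*n₁^2 - m₂*n₂^2) := by
    simp [Gpoly, Dpoly, pderiv_X, pderiv_two', pderiv_six', hv5]; ring
  have h3 : eval ![m₁, m₂, m₃, n₁, n₂, n₃] (pderiv 3 Gpoly)
      = 24*m₁*n₁*(m₁*n₁^2 - m₂*n₂^2 - m₃*n₃^2) := by
    simp [Gpoly, Dpoly, pderiv_X, pderiv_two', pderiv_six', hv5]; ring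
  have h4 : eval ![m₁, m₂, m₃, n₁, n₂, n₃] (pderiv 4 Gpoly)
      = 24*m₂*n₂*(m₂*n₂^2 - m₁*n₁^2 - m₃*n₃^2) := by
    simp [Gpoly, Dpoly, pderiv_X, pderiv_two', pderiv_six', hv5]; ring
  have h5 : eval ![m₁, m₂, m₃, n₁, n₂, n₃] (pderiv 5 Gpoly)
      = 24*m₃*n₃*(m₃*n₃^2 - m₁*n₁^2 - m₂*n₂^2) := by
    simp [Gpoly, Dpoly, pderiv_X, pderiv_two', pderiv_six', hv5]; ring
  apply hgrad
  rcases hpI.dvd_mul.mp hn with hn' | hc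
  · rcases hpI.dvd_mul.mp hn' with ha | hb
    · -- p ∣ n₁
      obtain ⟨k1, k2, k3, k4, k5, k6⟩ := key_lemma (p : ℤ) m₁ m₂ m₃ n₁ n₂ n₃ hpI hD' ha
      intro i; fin_cases i
      · show (p : ℤ) ∣ eval ![m₁, m₂, m₃, n₁, n₂, n₃] (pderiv 0 Gpoly)
        rw [h0]; exact k1
      · show (p : ℤ) ∣ eval ![m₁, m₂, m₃, n₁, n₂, n₃] (pderiv 1 Gpoly)
        rw [h1]; exact k2
      · show (p : ℤ) ∣ eval ![m₁, m₂, m₃, n₁, n₂, n₃] (pderiv 2 Gpoly)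
        rw [h2]; exact k3
      · show (p : ℤ) ∣ eval ![m₁, m₂, m₃, n₁, n₂, n₃] (pderiv 3 Gpoly)
        rw [h3]; exact k4
      · show (p : ℤ) ∣ eval ![m₁, m₂, m₃, n₁, n₂, n₃] (pderiv 4 Gpoly)
        rw [h4]; exact k5
      · show (p : ℤ) ∣ eval ![m₁, m₂, m₃, n₁, n₂, n₃] (pderiv 5 Gpoly)
        rw [h5]; exact k6
    · -- p ∣ n₂
      have hD2 : (p : ℤ) ∣ m₂^2*n₂^4 + m₁^2*n₁^4 + m₃^2*n₃^4
          - 2*(m₂*m₁*n₂^2*n₁^2 + m₂*m₃*n₂^2*n₃^2 + m₁*m₃*n₁^2*n₃^2) := by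
        obtain ⟨w, hw⟩ := hD'; exact ⟨w, by linear_combination hw⟩
      obtain ⟨k1, k2, k3, k4, k5, k6⟩ := key_lemma (p : ℤ) m₂ m₁ m₃ n₂ n₁ n₃ hpI hD2 hb
      intro i; fin_cases i
      · show (p : ℤ) ∣ eval ![m₁, m₂, m₃, n₁, n₂, n₃] (pderiv 0 Gpoly)
        rw [h0]; exact k2
      · show (p : ℤ) ∣ eval ![m₁, m₂, m₃, n₁, n₂, n₃] (pderiv 1 Gpoly)
        rw [h1]; exact k1
      · show (p : ℤ) ∣ eval ![m₁, m₂, m₃, n₁, n₂, n₃] (pderiv 2 Gpoly)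
        rw [h2]; obtain ⟨w, hw⟩ := k3; exact ⟨w, by linear_combination hw⟩
      · show (p : ℤ) ∣ eval ![m₁, m₂, m₃, n₁, n₂, n₃] (pderiv 3 Gpoly)
        rw [h3]; exact k5
      · show (p : ℤ) ∣ eval ![m₁, m₂, m₃, n₁, n₂, n₃] (pderiv 4 Gpoly)
        rw [h4]; exact k4
      · show (p : ℤ) ∣ eval ![m₁, m₂, m₃, n₁, n₂, n₃] (pderiv 5 Gpoly)
        rw [h5]; obtain ⟨w, hw⟩ := k6; exact ⟨w, by linear_combination hw⟩
  · -- p ∣ n₃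
    have hD3 : (p : ℤ) ∣ m₃^2*n₃^4 + m₁^2*n₁^4 + m₂^2*n₂^4
        - 2*(m₃*m₁*n₃^2*n₁^2 + m₃*m₂*n₃^2*n₂^2 + m₁*m₂*n₁^2*n₂^2) := by
      obtain ⟨w, hw⟩ := hD'; exact ⟨w, by linear_combination hw⟩
    obtain ⟨k1, k2, k3, k4, k5, k6⟩ := key_lemma (p : ℤ) m₃ m₁ m₂ n₃ n₁ n₂ hpI hD3 hc
    intro i; fin_cases i
    · show (p : ℤ) ∣ eval ![m₁, m₂, m₃, n₁, n₂, n₃] (pderiv 0 Gpoly)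
      rw [h0]; obtain ⟨w, hw⟩ := k2; exact ⟨w, by linear_combination hw⟩
    · show (p : ℤ) ∣ eval ![m₁, m₂, m₃, n₁, n₂, n₃] (pderiv 1 Gpoly)
      rw [h1]; obtain ⟨w, hw⟩ := k3; exact ⟨w, by linear_combination hw⟩
    · show (p : ℤ) ∣ eval ![m₁, m₂, m₃, n₁, n₂, n₃] (pderiv 2 Gpoly)
      rw [h2]; exact k1
    · show (p : ℤ) ∣ eval ![m₁, m₂, m₃, n₁, n₂, n₃] (pderiv 3 Gpoly)
      rw [h3]; obtain ⟨w, hw⟩ := k5; exact ⟨w, by linear_combination hw⟩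
    · show (p : ℤ) ∣ eval ![m₁, m₂, m₃, n₁, n₂, n₃] (pderiv 4 Gpoly)
      rw [h4]; obtain ⟨w, hw⟩ := k6; exact ⟨w, by linear_combination hw⟩
    · show (p : ℤ) ∣ eval ![m₁, m₂, m₃, n₁, n₂, n₃] (pderiv 5 Gpoly)
      rw [h5]; exact k4
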